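/- arXiv:2309.14189 — 6 statements merged into one kernel-verified Lean document; each statement's English description precedes it below -/
import Mathlib

section
/- In the same abstract setting, the inf-sup constant α := inf_{|||v|||=1} sup_{|||w|||=1} |b(v,w)| satisfies α ≤ 1/γ_st, where γ_st := sup{ω|||v_g||| : g ∈ K^⊥, ‖g‖ = 1} and v_g solves b(v_g, w) = (g,w) for all w ∈ V. (Upper inf-sup bound.) -/
open scoped RealInnerProductSpace

noncomputable section

variable {H V : Type*} [NormedAddCommGroup H] [InnerProductSpace ℝ H]
  [AddCommGroup V] [Module ℝ V]

/-- The Maxwell-type bilinear form `b(v,w) = -ω²(v,w)_H + (Av,Aw)_H`. -/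
def bform (ι A : V →ₗ[ℝ] H) (ω : ℝ) (v w : V) : ℝ :=
  -ω ^ 2 * ⟪ι v, ι w⟫ + ⟪A v, A w⟫

/-- The energy inner product `b⁺(v,w) = ω²(v,w)_H + (Av,Aw)_H`. -/
def bplus (ι A : V →ₗ[ℝ] H) (ω : ℝ) (v w : V) : ℝ :=
  ω ^ 2 * ⟪ι v, ι w⟫ + ⟪A v, A w⟫

/-- The energy norm `|||v||| = (ω²‖v‖² + ‖Av‖²)^{1/2}`. -/
def tnorm (ι A : V →ₗ[ℝ] H) (ω : ℝ) (v : V) : ℝ :=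
  Real.sqrt (ω ^ 2 * ‖ι v‖ ^ 2 + ‖A v‖ ^ 2)

lemma tnorm_nonneg (ι A : V →ₗ[ℝ] H) (ω : ℝ) (v : V) : 0 ≤ tnorm ι A ω v :=
  Real.sqrt_nonneg _

lemma tnorm_smul (ι A : V →ₗ[ℝ] H) (ω c : ℝ) (v : V) :
    tnorm ι A ω (c • v) = |c| * tnorm ι A ω v := by
  unfold tnorm
  rw [map_smul, map_smul, norm_smul, norm_smul, mul_pow, mul_pow,
    show ω ^ 2 * (‖c‖ ^ 2 * ‖ι v‖ ^ 2) + ‖c‖ ^ 2 * ‖A v‖ ^ 2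
      = ‖c‖ ^ 2 * (ω ^ 2 * ‖ι v‖ ^ 2 + ‖A v‖ ^ 2) by ring,
    Real.sqrt_mul (sq_nonneg _), Real.sqrt_sq_eq_abs, Real.norm_eq_abs, abs_abs]

lemma bform_smul_left (ι A : V →ₗ[ℝ] H) (ω c : ℝ) (v w : V) :
    bform ι A ω (c • v) w = c * bform ι A ω v w := by
  unfold bform
  rw [map_smul, map_smul, real_inner_smul_left, real_inner_smul_left]; ring

lemma norm_le_tnorm (ι A : V →ₗ[ℝ] H) {ω : ℝ} (hω : 0 < ω) (v : V) :
    ω * ‖ι v‖ ≤ tnorm ι A ω v := by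
  have : ω * ‖ι v‖ = Real.sqrt (ω ^ 2 * ‖ι v‖ ^ 2) := by
    rw [show ω ^ 2 * ‖ι v‖ ^ 2 = (ω * ‖ι v‖) ^ 2 by ring,
      Real.sqrt_sq (by positivity)]
  rw [this]
  exact Real.sqrt_le_sqrt (le_add_of_nonneg_right (by positivity))

/-- upper inf-sup bound α ≤ 1/γst. -/
theorem infsup_upper
    (ι A : V →ₗ[ℝ] H) (ω : ℝ) (hω : 0 < ω)
    (K : Submodule ℝ H) (hKc : IsClosed (K : Set H))
    (hKV : ∀ v : V, ι v ∈ K ↔ A v = 0)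
    (sol : H → V)
    (hsol : ∀ g ∈ Kᗮ, ∀ w : V, bform ι A ω (sol g) w = ⟪g, ι w⟫)
    (huniq : ∀ g ∈ Kᗮ, ∀ u : V, (∀ w : V, bform ι A ω u w = ⟪g, ι w⟫) → u = sol g)
    (γst : ℝ) (hγpos : 0 < γst)
    (hγst : IsLUB {x : ℝ | ∃ g ∈ Kᗮ, ‖g‖ = 1 ∧ x = ω * tnorm ι A ω (sol g)} γst) :
    (⨅ v : {v : V // tnorm ι A ω v = 1}, ⨆ w : {w : V // tnorm ι A ω w = 1},
      |bform ι A ω v.1 w.1|) ≤ 1 / γst := by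
  refine le_of_forall_gt_imp_ge_of_dense fun y hy => ?_
  -- 1/γst < y, so 1/y < γst
  have hy0 : 0 < y := lt_trans (by positivity) hy
  have hlt : 1 / y < γst := by
    rw [div_lt_iff₀ hy0]
    rw [div_lt_iff₀ hγpos] at hy
    linarith [hy]
  -- γst is LUB, so ∃ element of the set > 1/y
  obtain ⟨x, hxS, hxgt⟩ := (lt_isLUB_iff hγst).mp hlt
  obtain ⟨g, hg, hgn, hxeq⟩ := hxS
  set t := tnorm ι A ω (sol g) with ht
  have hx0 : 0 < x := lt_trans (by positivity) hxgt
  have ht0 : 0 < t := by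
    rw [hxeq] at hx0
    nlinarith [tnorm_nonneg ι A ω (sol g)]
  -- the normalized element
  set v : V := t⁻¹ • sol g with hv
  have hvt : tnorm ι A ω v = 1 := by
    rw [hv, tnorm_smul, abs_of_pos (inv_pos.mpr ht0), inv_mul_cancel₀ (ne_of_gt ht0)]
  have hbound : ∀ w : {w : V // tnorm ι A ω w = 1}, |bform ι A ω v w.1| ≤ 1 / x := by
    rintro ⟨w, hw⟩
    have h1 : bform ι A ω v w = t⁻¹ * ⟪g, ι w⟫ := by
      rw [hv, bform_smul_left, hsol g hg w]
    rw [h1, abs_mul, abs_of_pos (inv_pos.mpr ht0)]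
    have h2 : |⟪g, ι w⟫| ≤ ‖ι w‖ := by
      calc |⟪g, ι w⟫| ≤ ‖g‖ * ‖ι w‖ := abs_real_inner_le_norm _ _
      _ = ‖ι w‖ := by rw [hgn, one_mul]
    have h3 : ‖ι w‖ ≤ 1 / ω := by
      have := norm_le_tnorm ι A hω w
      rw [hw] at this
      rw [le_div_iff₀ hω]; linarith
    calc t⁻¹ * |⟪g, ι w⟫| ≤ t⁻¹ * (1 / ω) := by
          exact mul_le_mul_of_nonneg_left (h2.trans h3) (le_of_lt (inv_pos.mpr ht0))
      _ = 1 / x := by rw [hxeq]; field_simp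
  have hsup : (⨆ w : {w : V // tnorm ι A ω w = 1}, |bform ι A ω v w.1|) ≤ 1 / x :=
    Real.iSup_le hbound (by positivity)
  have hbdd : BddBelow (Set.range fun v : {v : V // tnorm ι A ω v = 1} =>
      ⨆ w : {w : V // tnorm ι A ω w = 1}, |bform ι A ω v.1 w.1|) := by
    refine ⟨0, ?_⟩
    rintro r ⟨u, rfl⟩
    exact Real.iSup_nonneg fun w => abs_nonneg _
  calc (⨅ v : {v : V // tnorm ι A ω v = 1}, ⨆ w : {w : V // tnorm ι A ω w = 1},
      |bform ι A ω v.1 w.1|) ≤ _ := ciInf_le hbdd ⟨v, hvt⟩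
    _ ≤ 1 / x := hsup
    _ ≤ y := by
        rw [div_le_iff₀ hx0]
        rw [div_lt_iff₀ hy0] at hxgt
        linarith
end
end

section
/- In the abstract discrete setting, let V_h ⊆ V be a closed subspace, K_h := {v_h ∈ V_h : Av_h = 0}, and let P : V → V_h be the b⁺-orthogonal (energy) projection, where b⁺(v,w) = ω²(v,w)_H + (Av,Aw)_H. If v ∈ V is H-orthogonal to K_h (i.e., (v, w_h)_H = 0 for all w_h ∈ K_h), then Pv is also H-orthogonal to K_h. -/
open scoped RealInnerProductSpace

noncomputable section

variable {H V : Type*} [NormedAddCommGroup H] [InnerProductSpace ℝ H]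
  [AddCommGroup V] [Module ℝ V]

/-- the energy projection preserves H-orthogonality to Kh. -/
theorem best_approx_preserves_orth
    (ι A : V →ₗ[ℝ] H) (ω : ℝ) (hω : 0 < ω)
    (Vh : Submodule ℝ V)
    (P : V →ₗ[ℝ] V) (hPmem : ∀ v : V, P v ∈ Vh)
    (hPorth : ∀ v : V, ∀ wh ∈ Vh, bplus ι A ω (v - P v) wh = 0)
    (v : V) (hv : ∀ wh ∈ Vh, A wh = 0 → ⟪ι v, ι wh⟫ = 0) :
    ∀ wh ∈ Vh, A wh = 0 → ⟪ι (P v), ι wh⟫ = 0 := by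
  intro wh hwh hAwh
  have h := hPorth v wh hwh
  simp only [bplus, map_sub, hAwh, inner_zero_right, add_zero, inner_sub_left] at h
  have := hv wh hwh hAwh
  have hω2 : ω ^ 2 ≠ 0 := pow_ne_zero _ hω.ne'
  rcases mul_eq_zero.mp h with h' | h'
  · exact absurd h' hω2
  · linarith
end
end

section
/- (Bound on the conformity error component, Lemma 4.3 of the paper.) In the abstract setting with Galerkin orthogonality, let e = θ₀ + θ_Π (θ_Π = Πe, Π the H-projection onto K = ker A∩-type closed subspace), η := E − P(E) the best-approximation error (P the energy projection onto V_h), and let γ_div := sup{ω‖Π v_h‖_H : v_h ∈ V_h, (v_h, w_h)_H = 0 ∀ w_h ∈ K_h, ‖Av_h‖_H = 1}. Then (1 − γ_div) ω‖θ_Π‖_H ≤ ω‖Π η‖_H + γ_div |||θ₀|||. -/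
open scoped RealInnerProductSpace

noncomputable section

variable {H V : Type*} [NormedAddCommGroup H] [InnerProductSpace ℝ H]
  [AddCommGroup V] [Module ℝ V]

/-- Cauchy–Schwarz in ℝ². -/
lemma aux_cs (a b c d : ℝ) :
    a * c + b * d ≤ Real.sqrt (a ^ 2 + b ^ 2) * Real.sqrt (c ^ 2 + d ^ 2) := by
  rw [← Real.sqrt_mul (by positivity)]
  have h := Real.sqrt_le_sqrt
    (show (a * c + b * d) ^ 2 ≤ (a ^ 2 + b ^ 2) * (c ^ 2 + d ^ 2) by
      nlinarith [sq_nonneg (a * d - b * c)])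
  calc a * c + b * d ≤ |a * c + b * d| := le_abs_self _
    _ = Real.sqrt ((a * c + b * d) ^ 2) := (Real.sqrt_sq_eq_abs _).symm
    _ ≤ _ := h

/-- Triangle inequality in ℝ². -/
lemma aux_tri (a b c d : ℝ) :
    Real.sqrt ((a + c) ^ 2 + (b + d) ^ 2) ≤
      Real.sqrt (a ^ 2 + b ^ 2) + Real.sqrt (c ^ 2 + d ^ 2) := by
  have hs : Real.sqrt (a ^ 2 + b ^ 2) ^ 2 = a ^ 2 + b ^ 2 :=
    Real.sq_sqrt (by positivity)
  have ht : Real.sqrt (c ^ 2 + d ^ 2) ^ 2 = c ^ 2 + d ^ 2 :=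
    Real.sq_sqrt (by positivity)
  have hcs := aux_cs a b c d
  have h : (a + c) ^ 2 + (b + d) ^ 2 ≤
      (Real.sqrt (a ^ 2 + b ^ 2) + Real.sqrt (c ^ 2 + d ^ 2)) ^ 2 := by
    nlinarith
  calc Real.sqrt ((a + c) ^ 2 + (b + d) ^ 2)
      ≤ Real.sqrt ((Real.sqrt (a ^ 2 + b ^ 2) + Real.sqrt (c ^ 2 + d ^ 2)) ^ 2) :=
        Real.sqrt_le_sqrt h
    _ = _ := Real.sqrt_sq (by positivity)

lemma tnorm_eq (ι A : V →ₗ[ℝ] H) (ω : ℝ) (v : V) :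
    tnorm ι A ω v = Real.sqrt ((ω * ‖ι v‖) ^ 2 + ‖A v‖ ^ 2) := by
  unfold tnorm; congr 1; ring

lemma tnorm_sq (ι A : V →ₗ[ℝ] H) (ω : ℝ) (v : V) :
    tnorm ι A ω v ^ 2 = ω ^ 2 * ‖ι v‖ ^ 2 + ‖A v‖ ^ 2 :=
  Real.sq_sqrt (by positivity)

lemma bplus_self (ι A : V →ₗ[ℝ] H) (ω : ℝ) (v : V) :
    bplus ι A ω v v = tnorm ι A ω v ^ 2 := by
  rw [tnorm_sq]
  simp [bplus, real_inner_self_eq_norm_sq]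

lemma bplus_le (ι A : V →ₗ[ℝ] H) (ω : ℝ) (hω : 0 ≤ ω) (v w : V) :
    bplus ι A ω v w ≤ tnorm ι A ω v * tnorm ι A ω w := by
  have h1 : bplus ι A ω v w ≤ (ω * ‖ι v‖) * (ω * ‖ι w‖) + ‖A v‖ * ‖A w‖ := by
    have := real_inner_le_norm (ι v) (ι w)
    have := real_inner_le_norm (A v) (A w)
    have hω2 : (0:ℝ) ≤ ω ^ 2 := sq_nonneg ω
    unfold bplus
    nlinarith
  calc bplus ι A ω v w ≤ (ω * ‖ι v‖) * (ω * ‖ι w‖) + ‖A v‖ * ‖A w‖ := h1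
    _ ≤ _ := by rw [tnorm_eq, tnorm_eq]; exact aux_cs _ _ _ _

lemma tnorm_add_le (ι A : V →ₗ[ℝ] H) (ω : ℝ) (hω : 0 ≤ ω) (v w : V) :
    tnorm ι A ω (v + w) ≤ tnorm ι A ω v + tnorm ι A ω w := by
  rw [tnorm_eq, tnorm_eq, tnorm_eq]
  have h1 : (ω * ‖ι (v + w)‖) ^ 2 + ‖A (v + w)‖ ^ 2 ≤
      (ω * ‖ι v‖ + ω * ‖ι w‖) ^ 2 + (‖A v‖ + ‖A w‖) ^ 2 := by
    have hι : ‖ι (v + w)‖ ≤ ‖ι v‖ + ‖ι w‖ := by rw [map_add]; exact norm_add_le _ _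
    have hA : ‖A (v + w)‖ ≤ ‖A v‖ + ‖A w‖ := by rw [map_add]; exact norm_add_le _ _
    have h2 : (ω * ‖ι (v + w)‖) ^ 2 ≤ (ω * ‖ι v‖ + ω * ‖ι w‖) ^ 2 := by
      rw [show ω * ‖ι v‖ + ω * ‖ι w‖ = ω * (‖ι v‖ + ‖ι w‖) by ring]
      have := mul_le_mul_of_nonneg_left hι hω
      nlinarith [norm_nonneg (ι (v + w)), mul_nonneg hω (norm_nonneg (ι (v+w)))]
    have h3 : ‖A (v + w)‖ ^ 2 ≤ (‖A v‖ + ‖A w‖) ^ 2 := by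
      nlinarith [norm_nonneg (A (v + w))]
    linarith
  calc Real.sqrt ((ω * ‖ι (v + w)‖) ^ 2 + ‖A (v + w)‖ ^ 2)
      ≤ Real.sqrt ((ω * ‖ι v‖ + ω * ‖ι w‖) ^ 2 + (‖A v‖ + ‖A w‖) ^ 2) :=
        Real.sqrt_le_sqrt h1
    _ ≤ _ := aux_tri _ _ _ _

/-- bound on the conformity error component (Lemma 4.3). -/
theorem conformity_error_bound
    (ι A : V →ₗ[ℝ] H) (ω : ℝ) (hω : 0 < ω)
    (K : Submodule ℝ H) (hKc : IsClosed (K : Set H))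
    (hKV : ∀ v : V, ι v ∈ K ↔ A v = 0)
    (Pi : H →ₗ[ℝ] H) (hPimem : ∀ x : H, Pi x ∈ K)
    (hPifix : ∀ x ∈ K, Pi x = x)
    (hPiorth : ∀ x : H, ∀ y ∈ K, ⟪x - Pi x, y⟫ = 0)
    (Vh : Submodule ℝ V)
    -- energy projection P onto Vh
    (P : V →ₗ[ℝ] V) (hPmem : ∀ v : V, P v ∈ Vh)
    (hPorth : ∀ v : V, ∀ wh ∈ Vh, bplus ι A ω (v - P v) wh = 0)
    -- divergence conformity factor
    (γdiv : ℝ) (hγdivnn : 0 ≤ γdiv)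
    (hγdiv : ∀ vh ∈ Vh, (∀ wh ∈ Vh, A wh = 0 → ⟪ι vh, ι wh⟫ = 0) →
      ω * ‖Pi (ι vh)‖ ≤ γdiv * ‖A vh‖)
    -- Galerkin setting
    (E Eh : V) (hEh : Eh ∈ Vh)
    (hGal : ∀ wh ∈ Vh, bform ι A ω (E - Eh) wh = 0)
    (θPi : V) (hθPi : ι θPi = Pi (ι (E - Eh))) :
    (1 - γdiv) * (ω * ‖ι θPi‖) ≤
      ω * ‖Pi (ι (E - P E))‖ + γdiv * tnorm ι A ω (E - Eh - θPi) := by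
  have hω2 : (ω : ℝ) ^ 2 ≠ 0 := pow_ne_zero 2 hω.ne'
  set e : V := E - Eh with he
  set η : V := E - P E with hη
  set vh : V := P E - Eh with hvh
  have hvhmem : vh ∈ Vh := Submodule.sub_mem _ (hPmem E) hEh
  -- A θPi = 0
  have hAθ : A θPi = 0 := (hKV θPi).mp (by rw [hθPi]; exact hPimem _)
  -- decomposition e = η + vh
  have hdec : e = η + vh := by rw [he, hη, hvh]; abel
  -- triangle for Pi (ι e)
  have htri : ‖Pi (ι e)‖ ≤ ‖Pi (ι η)‖ + ‖Pi (ι vh)‖ := by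
    rw [hdec, map_add, map_add]; exact norm_add_le _ _
  -- orthogonality of vh to Kh
  have hperp : ∀ wh ∈ Vh, A wh = 0 → ⟪ι vh, ι wh⟫ = 0 := by
    intro wh hwh hA0
    have h1 : ⟪ι e, ι wh⟫ = 0 := by
      have := hGal wh hwh
      rw [bform, hA0, inner_zero_right] at this
      have : -ω ^ 2 * ⟪ι e, ι wh⟫ = 0 := by linarith
      rcases mul_eq_zero.mp this with h | h
      · exact absurd (neg_eq_zero.mp h) hω2
      · exact h
    have h2 : ⟪ι η, ι wh⟫ = 0 := by
      have := hPorth E wh hwh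
      rw [bplus, hA0, inner_zero_right] at this
      have : ω ^ 2 * ⟪ι (E - P E), ι wh⟫ = 0 := by linarith
      rcases mul_eq_zero.mp this with h | h
      · exact absurd h hω2
      · exact h
    have : ι vh = ι e - ι η := by rw [← map_sub]; congr 1; rw [he, hη, hvh]; abel
    rw [this, inner_sub_left, h1, h2, sub_zero]
  -- γdiv bound on vh
  have hγ : ω * ‖Pi (ι vh)‖ ≤ γdiv * ‖A vh‖ := hγdiv vh hvhmem hperp
  -- tnorm vh ≤ tnorm e
  have hvhle : tnorm ι A ω vh ≤ tnorm ι A ω e := by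
    have key : bplus ι A ω vh vh = bplus ι A ω e vh := by
      have h0 : bplus ι A ω (e - vh) vh = 0 := by
        have : e - vh = E - P E := by rw [he, hvh]; abel
        rw [this]; exact hPorth E vh hvhmem
      have hexp : bplus ι A ω (e - vh) vh =
          bplus ι A ω e vh - bplus ι A ω vh vh := by
        simp only [bplus, map_sub, inner_sub_left]; ring
      rw [hexp] at h0; linarith
    have h1 : tnorm ι A ω vh ^ 2 ≤ tnorm ι A ω e * tnorm ι A ω vh := by
      rw [← bplus_self, key]; exact bplus_le ι A ω hω.le e vh
    nlinarith [h1, tnorm_nonneg ι A ω vh, tnorm_nonneg ι A ω e]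
  -- ‖A vh‖ ≤ tnorm vh
  have hAvh : ‖A vh‖ ≤ tnorm ι A ω vh := by
    calc ‖A vh‖ = Real.sqrt (‖A vh‖ ^ 2) := (Real.sqrt_sq (norm_nonneg _)).symm
      _ ≤ Real.sqrt (ω ^ 2 * ‖ι vh‖ ^ 2 + ‖A vh‖ ^ 2) :=
          Real.sqrt_le_sqrt (by nlinarith [sq_nonneg (ω * ‖ι vh‖)])
      _ = tnorm ι A ω vh := rfl
  -- tnorm e ≤ ω ‖ι θPi‖ + tnorm θ0
  have hθnorm : tnorm ι A ω θPi = ω * ‖ι θPi‖ := by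
    rw [tnorm, hAθ, norm_zero]
    rw [show ω ^ 2 * ‖ι θPi‖ ^ 2 + (0:ℝ) ^ 2 = (ω * ‖ι θPi‖) ^ 2 by ring]
    exact Real.sqrt_sq (by positivity)
  have hetri : tnorm ι A ω e ≤ ω * ‖ι θPi‖ + tnorm ι A ω (e - θPi) := by
    have : e = θPi + (e - θPi) := by abel
    calc tnorm ι A ω e = tnorm ι A ω (θPi + (e - θPi)) := by rw [← this]
      _ ≤ tnorm ι A ω θPi + tnorm ι A ω (e - θPi) := tnorm_add_le ι A ω hω.le _ _
      _ = ω * ‖ι θPi‖ + tnorm ι A ω (e - θPi) := by rw [hθnorm]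
  -- assemble
  have hθeq : ‖ι θPi‖ = ‖Pi (ι e)‖ := by rw [hθPi]
  have hAvh2 : γdiv * ‖A vh‖ ≤ γdiv * (ω * ‖ι θPi‖ + tnorm ι A ω (e - θPi)) :=
    mul_le_mul_of_nonneg_left (le_trans hAvh (le_trans hvhle hetri)) hγdivnn
  have hmain : ω * ‖ι θPi‖ ≤ ω * ‖Pi (ι η)‖ + γdiv * (ω * ‖ι θPi‖ + tnorm ι A ω (e - θPi)) := by
    have h := mul_le_mul_of_nonneg_left htri hω.le
    rw [← hθeq] at h
    nlinarith [h, hγ, hAvh2]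
  have hfinal : (1 - γdiv) * (ω * ‖ι θPi‖) ≤
      ω * ‖Pi (ι η)‖ + γdiv * tnorm ι A ω (e - θPi) := by nlinarith [hmain]
  exact hfinal
end
end

section
/- (E_h − P(E) is discretely divergence-free.) In the abstract Galerkin setting with symmetric b(v,w) = -ω²(v,w)_H + (Av,Aw)_H and b⁺(v,w) = ω²(v,w)_H + (Av,Aw)_H: if E ∈ V, E_h ∈ V_h satisfy b(E − E_h, w_h) = 0 for all w_h ∈ V_h, and P : V → V_h is the b⁺-projection, then (E_h − P(E), v_h)_H = 0 for all v_h ∈ K_h := {v_h ∈ V_h : Av_h = 0}. -/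
open scoped RealInnerProductSpace

noncomputable section

variable {H V : Type*} [NormedAddCommGroup H] [InnerProductSpace ℝ H]
  [AddCommGroup V] [Module ℝ V]

/-- Eh − P(E) is discretely divergence-free. -/
theorem Eh_sub_PE_discretely_divfree
    (ι A : V →ₗ[ℝ] H) (ω : ℝ) (hω : 0 < ω)
    (Vh : Submodule ℝ V)
    (P : V →ₗ[ℝ] V) (hPmem : ∀ v : V, P v ∈ Vh)
    (hPorth : ∀ v : V, ∀ wh ∈ Vh, bplus ι A ω (v - P v) wh = 0)
    (E Eh : V) (hEh : Eh ∈ Vh)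
    (hGal : ∀ wh ∈ Vh, bform ι A ω (E - Eh) wh = 0) :
    ∀ vh ∈ Vh, A vh = 0 → ⟪ι (Eh - P E), ι vh⟫ = 0 := by
  intro vh hvh hAvh
  have h1 := hGal vh hvh
  have h2 := hPorth E vh hvh
  simp only [bform, bplus, hAvh, inner_zero_right, add_zero, map_sub] at h1 h2 ⊢
  rw [inner_sub_left] at h1 h2 ⊢
  have hω2 : ω ^ 2 ≠ 0 := pow_ne_zero _ hω.ne'
  have e1 : ⟪ι E, ι vh⟫ - ⟪ι Eh, ι vh⟫ = 0 := by
    have := mul_eq_zero.mp h1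
    rcases this with h | h
    · exact absurd (neg_eq_zero.mp h) hω2
    · exact h
  have e2 : ⟪ι E, ι vh⟫ - ⟪ι (P E), ι vh⟫ = 0 := by
    rcases mul_eq_zero.mp h2 with h | h
    · exact absurd h hω2
    · exact h
  linarith
end
end

section
/- (Bound on the divergence conformity factor via quasi-interpolation, inequality (5.8) of the paper, abstract version.) Let J : H → V_h be a linear operator that leaves V_h pointwise invariant and maps K ∩ V into K_h (commuting property). Then for every v_h ∈ V_h that is H-orthogonal to K_h, one has ‖Π v_h‖_H ≤ ‖w − J w‖_H, where w := (I − Π)v_h; consequently γ_div ≤ sup{ω‖w − Jw‖_H : w ∈ X₀, ‖Aw‖ = 1} where X₀ = V ∩ K^⊥. -/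
open scoped RealInnerProductSpace

noncomputable section

variable {H V : Type*} [NormedAddCommGroup H] [InnerProductSpace ℝ H]
  [AddCommGroup V] [Module ℝ V]

/-- bound on the divergence conformity factor via quasi-interpolation. -/
theorem gdiv_bound_quasi_interpolation
    (ι A : V →ₗ[ℝ] H) (ω : ℝ) (hω : 0 < ω)
    (K : Submodule ℝ H) (hKc : IsClosed (K : Set H))
    (hKV : ∀ v : V, ι v ∈ K ↔ A v = 0)
    (Pi : H →ₗ[ℝ] H) (hPimem : ∀ x : H, Pi x ∈ K)
    (hPifix : ∀ x ∈ K, Pi x = x)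
    (hPiorth : ∀ x : H, ∀ y ∈ K, ⟪x - Pi x, y⟫ = 0)
    (Vh : Submodule ℝ V)
    -- quasi-interpolation operator J with values in Vh, invariant on Vh,
    -- mapping K ∩ V into Kh
    (J : H →ₗ[ℝ] H)
    (hJrange : ∀ x : H, ∃ w ∈ Vh, ι w = J x)
    (hJfix : ∀ w ∈ Vh, J (ι w) = ι w)
    (hJK : ∀ w : V, ι w ∈ K → ∃ w' ∈ Vh, A w' = 0 ∧ ι w' = J (ι w))
    -- a discrete field H-orthogonal to Kh with decomposition w = (I−Π)v_h
    (vh : V) (hvh : vh ∈ Vh)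
    (hvhorth : ∀ wh ∈ Vh, A wh = 0 → ⟪ι vh, ι wh⟫ = 0)
    (wrep : V) (hwrep : ι wrep = ι vh - Pi (ι vh)) :
    ‖Pi (ι vh)‖ ≤ ‖ι wrep - J (ι wrep)‖ ∧
    (∀ c : ℝ, (∀ w : V, ι w ∈ Kᗮ → ω * ‖ι w - J (ι w)‖ ≤ c * ‖A w‖) →
      ω * ‖Pi (ι vh)‖ ≤ c * ‖A vh‖) := by

  set u := Pi (ι vh) with hu
  have hu_eq : ι (vh - wrep) = u := by
    simp [map_sub, hwrep]
  have huK : u ∈ K := hPimem _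
  -- first inequality
  have hmain : ‖u‖ ≤ ‖ι wrep - J (ι wrep)‖ := by
    obtain ⟨w', hw'Vh, hAw', hw'⟩ := hJK (vh - wrep) (hu_eq ▸ huK)
    have horthu : ⟪u, ι w'⟫ = 0 := by
      have h1 : ⟪ι vh, ι w'⟫ = 0 := hvhorth w' hw'Vh hAw'
      have h2 : ⟪ι vh - u, ι w'⟫ = 0 := hPiorth (ι vh) (ι w') ((hKV w').2 hAw')
      have := inner_sub_left (𝕜 := ℝ) (ι vh) u (ι w')
      rw [h2, h1] at this
      linarith
    have hJu : J u = ι vh - J (ι wrep) := by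
      rw [← hu_eq, map_sub, map_sub, hJfix vh hvh]
    have hsq : ‖u‖ ^ 2 = -⟪u, ι wrep - J (ι wrep)⟫ := by
      have hw'' : ι w' = J u := by rw [hw', hu_eq]
      have : ⟪u, u⟫ = ⟪u, u - J u⟫ := by
        rw [inner_sub_right, ← hw'', horthu]; ring
      have heq : u - J u = -(ι wrep - J (ι wrep)) := by
        rw [hJu, hwrep]; abel
      rw [← real_inner_self_eq_norm_sq, this, heq, inner_neg_right]
    have hcs : -⟪u, ι wrep - J (ι wrep)⟫ ≤ ‖u‖ * ‖ι wrep - J (ι wrep)‖ := by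
      have := abs_real_inner_le_norm u (ι wrep - J (ι wrep))
      have := neg_abs_le (⟪u, ι wrep - J (ι wrep)⟫)
      linarith [abs_real_inner_le_norm u (ι wrep - J (ι wrep))]
    rcases eq_or_lt_of_le (norm_nonneg u) with h0 | h0
    · rw [← h0]; exact norm_nonneg _
    · have : ‖u‖ * ‖u‖ ≤ ‖u‖ * ‖ι wrep - J (ι wrep)‖ := by
        rw [← sq]; linarith
      exact le_of_mul_le_mul_left this h0
  refine ⟨hmain, fun c hc => ?_⟩
  have hwKperp : ι wrep ∈ Kᗮ := by
    intro y hy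
    have := hPiorth (ι vh) y hy
    rw [real_inner_comm]
    rwa [hwrep]
  have hAeq : A wrep = A vh := by
    have : A (vh - wrep) = 0 := (hKV _).1 (hu_eq ▸ huK)
    rw [map_sub] at this
    exact (sub_eq_zero.mp this).symm
  have h2 := hc wrep hwKperp
  rw [hAeq] at h2
  calc ω * ‖u‖ ≤ ω * ‖ι wrep - J (ι wrep)‖ := by
        exact mul_le_mul_of_nonneg_left hmain hω.le
    _ ≤ c * ‖A vh‖ := h2
end
end

section
/- (Step-1 inequality of the discrete inf-sup proof.) In the abstract setting of the discrete inf-sup theorem, let v_h ∈ V_h, set v_{h0} := (I − Π_h)v_h and φ₀ := (I − Π)v_{h0}, let ξ₀ ∈ V solve b(w, ξ₀) = ω²(w, φ₀)_H for all w ∈ V, and set ξ_{h0} := P(ξ₀). Then b(v_h, ξ_{h0}) ≥ ω²‖v_{h0}‖_H² − (γ_div² + γ_app)|||v_h|||². -/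
open scoped RealInnerProductSpace

noncomputable section

variable {H V : Type*} [NormedAddCommGroup H] [InnerProductSpace ℝ H]
  [AddCommGroup V] [Module ℝ V]

lemma tnorm_neg (ι A : V →ₗ[ℝ] H) (ω : ℝ) (v : V) :
    tnorm ι A ω (-v) = tnorm ι A ω v := by
  simp [tnorm]

lemma abs_bform_le (ι A : V →ₗ[ℝ] H) (ω : ℝ) (v w : V) :
    |bform ι A ω v w| ≤ tnorm ι A ω v * tnorm ι A ω w := by
  have h1 := abs_real_inner_le_norm (ι v) (ι w)
  have h2 := abs_real_inner_le_norm (A v) (A w)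
  have habs : |bform ι A ω v w| ≤ ω ^ 2 * ‖ι v‖ * ‖ι w‖ + ‖A v‖ * ‖A w‖ := by
    have := abs_add_le (-ω ^ 2 * ⟪ι v, ι w⟫) ⟪A v, A w⟫
    rw [bform]
    refine le_trans this ?_
    rw [abs_mul, abs_neg, abs_pow, sq_abs]
    nlinarith [abs_nonneg (⟪ι v, ι w⟫), sq_nonneg ω]
  refine le_trans habs ?_
  rw [tnorm, tnorm, ← Real.sqrt_mul (by positivity)]
  rw [show ω ^ 2 * ‖ι v‖ * ‖ι w‖ + ‖A v‖ * ‖A w‖ =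
    Real.sqrt ((ω ^ 2 * ‖ι v‖ * ‖ι w‖ + ‖A v‖ * ‖A w‖) ^ 2) from
    (Real.sqrt_sq (by positivity)).symm]
  apply Real.sqrt_le_sqrt
  nlinarith [sq_nonneg (ω * ‖ι v‖ * ‖A w‖ - ω * ‖ι w‖ * ‖A v‖)]

lemma norm_sub_proj_le (x p : H) (h : ⟪x - p, p⟫ = 0) : ‖x - p‖ ≤ ‖x‖ := by
  have h2 : ‖x‖ ^ 2 = ‖x - p‖ ^ 2 + ‖p‖ ^ 2 := by
    have := norm_add_sq_real (x - p) p
    rw [h, sub_add_cancel] at this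
    linarith
  nlinarith [norm_nonneg (x - p), norm_nonneg x, norm_nonneg p]

set_option maxHeartbeats 1600000 in
/-- step-1 inequality of the discrete inf-sup proof. -/
theorem discrete_infsup_step1
    (ι A : V →ₗ[ℝ] H) (ω : ℝ) (hω : 0 < ω)
    (K : Submodule ℝ H) (hKc : IsClosed (K : Set H))
    (hKV : ∀ v : V, ι v ∈ K ↔ A v = 0)
    (Pi : H →ₗ[ℝ] H) (hPimem : ∀ x : H, Pi x ∈ K)
    (hPifix : ∀ x ∈ K, Pi x = x)
    (hPiorth : ∀ x : H, ∀ y ∈ K, ⟪x - Pi x, y⟫ = 0)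
    (Vh : Submodule ℝ V)
    -- H-orthogonal projection Πh onto Kh
    (Pih : H →ₗ[ℝ] H)
    (hPihmem : ∀ x : H, ∃ w ∈ Vh, A w = 0 ∧ ι w = Pih x)
    (hPihfix : ∀ w ∈ Vh, A w = 0 → Pih (ι w) = ι w)
    (hPihorth : ∀ x : H, ∀ w ∈ Vh, A w = 0 → ⟪x - Pih x, ι w⟫ = 0)
    -- energy projection onto Vh
    (P : V →ₗ[ℝ] V) (hPmem : ∀ v : V, P v ∈ Vh)
    (hPorth : ∀ v : V, ∀ wh ∈ Vh, bplus ι A ω (v - P v) wh = 0)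
    -- factors
    (γapp γdiv : ℝ) (hγappnn : 0 ≤ γapp) (hγdivnn : 0 ≤ γdiv)
    (hγdiv : ∀ uh ∈ Vh, (∀ wh ∈ Vh, A wh = 0 → ⟪ι uh, ι wh⟫ = 0) →
      ω * ‖Pi (ι uh)‖ ≤ γdiv * ‖A uh‖)
    -- the data of step 1
    (vh : V) (hvh : vh ∈ Vh)
    (vhPi : V) (hvhPimem : vhPi ∈ Vh) (hvhPiker : A vhPi = 0)
    (hvhPi : ι vhPi = Pih (ι vh))
    -- ξ₀ solves the adjoint problem with data ω²φ₀, φ₀ = (I−Π)(v_{h0})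
    (ξ₀ : V)
    (hξ₀ : ∀ w : V, bform ι A ω w ξ₀ =
      ω ^ 2 * ⟪ι w, ι (vh - vhPi) - Pi (ι (vh - vhPi))⟫)
    (hξapp : ∃ wh ∈ Vh, tnorm ι A ω (ξ₀ - wh) ≤
      γapp * ω * ‖ι (vh - vhPi) - Pi (ι (vh - vhPi))‖) :
    ω ^ 2 * ‖ι (vh - vhPi)‖ ^ 2 - (γdiv ^ 2 + γapp) * tnorm ι A ω vh ^ 2
      ≤ bform ι A ω vh (P ξ₀) := by
  have hT2 : tnorm ι A ω vh ^ 2 = ω ^ 2 * ‖ι vh‖ ^ 2 + ‖A vh‖ ^ 2 := tnorm_sq ι A ω vh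
  have hω2 : (0:ℝ) < ω ^ 2 := by positivity
  have hιv0 : ι (vh - vhPi) = ι vh - Pih (ι vh) := by
    rw [map_sub, hvhPi]
  have hAv0 : A (vh - vhPi) = A vh := by
    rw [map_sub, hvhPiker, sub_zero]
  have hv0mem : vh - vhPi ∈ Vh := Vh.sub_mem hvh hvhPimem
  -- ξ₀ is H-orthogonal to the kernel
  have horthξ : ∀ w : V, A w = 0 → ⟪ι w, ι ξ₀⟫ = 0 := by
    intro w hw
    have h1 := hξ₀ w
    have hK : ι w ∈ K := (hKV w).mpr hw
    have h2 : ⟪ι w, ι (vh - vhPi) - Pi (ι (vh - vhPi))⟫ = 0 := by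
      rw [real_inner_comm]; exact hPiorth _ _ hK
    rw [bform, hw] at h1
    simp only [inner_zero_left, add_zero] at h1
    rw [h2, mul_zero] at h1
    have h3 : ω ^ 2 * ⟪ι w, ι ξ₀⟫ = 0 := by linarith
    rcases mul_eq_zero.mp h3 with h | h
    · exact absurd h (ne_of_gt hω2)
    · exact h
  -- P ξ₀ is H-orthogonal to vhPi
  have hPiho : ⟪ι vhPi, ι (P ξ₀)⟫ = 0 := by
    have h1 := hPorth ξ₀ vhPi hvhPimem
    rw [bplus, map_sub, map_sub, hvhPiker] at h1
    simp only [inner_zero_right, add_zero, inner_sub_left] at h1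
    have h2 := horthξ vhPi hvhPiker
    rw [real_inner_comm] at h2
    have h3 : ⟪ι (P ξ₀), ι vhPi⟫ = 0 := by nlinarith
    rw [real_inner_comm]; exact h3
  -- reduce to v0
  have hsplit : bform ι A ω vh (P ξ₀) = bform ι A ω (vh - vhPi) (P ξ₀) := by
    rw [bform, bform, map_sub, map_sub, hvhPiker]
    simp only [inner_sub_left, hPiho, sub_zero]
  -- value of b(v0, ξ₀)
  have hPiv0 : ⟪ι (vh - vhPi) - Pi (ι (vh - vhPi)), Pi (ι (vh - vhPi))⟫ = 0 :=
    hPiorth _ _ (hPimem _)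
  have hbv0ξ : bform ι A ω (vh - vhPi) ξ₀ =
      ω ^ 2 * ‖ι (vh - vhPi)‖ ^ 2 - ω ^ 2 * ‖Pi (ι (vh - vhPi))‖ ^ 2 := by
    rw [hξ₀ (vh - vhPi)]
    rw [inner_sub_left, real_inner_self_eq_norm_sq] at hPiv0
    rw [inner_sub_right, real_inner_self_eq_norm_sq]
    nlinarith
  -- divergence bound
  have hdiv : ω * ‖Pi (ι (vh - vhPi))‖ ≤ γdiv * ‖A vh‖ := by
    rw [← hAv0]
    refine hγdiv (vh - vhPi) hv0mem ?_
    intro wh hwh hAwh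
    rw [hιv0]
    exact hPihorth (ι vh) wh hwh hAwh
  have hAleT : ‖A vh‖ ^ 2 ≤ tnorm ι A ω vh ^ 2 := by
    rw [hT2]; nlinarith [norm_nonneg (ι vh)]
  have hdivsq : ω ^ 2 * ‖Pi (ι (vh - vhPi))‖ ^ 2 ≤ γdiv ^ 2 * tnorm ι A ω vh ^ 2 := by
    have h1 : (ω * ‖Pi (ι (vh - vhPi))‖) ^ 2 ≤ (γdiv * ‖A vh‖) ^ 2 := by
      have hnn : 0 ≤ ω * ‖Pi (ι (vh - vhPi))‖ := by positivity
      nlinarith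
    nlinarith [norm_nonneg (A vh), sq_nonneg γdiv]
  -- norm chains
  have hιv0le : ‖ι (vh - vhPi)‖ ≤ ‖ι vh‖ := by
    rw [hιv0]
    apply norm_sub_proj_le
    have := hPihorth (ι vh) vhPi hvhPimem hvhPiker
    rw [hvhPi] at this
    exact this
  have hφle : ‖ι (vh - vhPi) - Pi (ι (vh - vhPi))‖ ≤ ‖ι (vh - vhPi)‖ :=
    norm_sub_proj_le _ _ (hPiorth _ _ (hPimem _))
  have hTv0 : tnorm ι A ω (vh - vhPi) ≤ tnorm ι A ω vh := by
    rw [tnorm, tnorm, hAv0]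
    apply Real.sqrt_le_sqrt
    nlinarith [mul_le_mul hιv0le hιv0le (norm_nonneg (ι (vh - vhPi))) (norm_nonneg (ι vh)),
      hω2.le]
  have hωφT : ω * ‖ι (vh - vhPi) - Pi (ι (vh - vhPi))‖ ≤ tnorm ι A ω vh := by
    have h1 : ω * ‖ι (vh - vhPi) - Pi (ι (vh - vhPi))‖ ≤ ω * ‖ι vh‖ :=
      mul_le_mul_of_nonneg_left (le_trans hφle hιv0le) hω.le
    refine le_trans h1 ?_
    have h2 : (ω * ‖ι vh‖) ^ 2 ≤ ω ^ 2 * ‖ι vh‖ ^ 2 + ‖A vh‖ ^ 2 := by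
      nlinarith [sq_nonneg (‖A vh‖)]
    have h3 := Real.sqrt_le_sqrt h2
    rwa [Real.sqrt_sq (by positivity)] at h3
  -- best approximation property of P
  have hbest : tnorm ι A ω (ξ₀ - P ξ₀) ≤
      γapp * ω * ‖ι (vh - vhPi) - Pi (ι (vh - vhPi))‖ := by
    obtain ⟨wh, hwhm, hwhle⟩ := hξapp
    refine le_trans ?_ hwhle
    have hd : P ξ₀ - wh ∈ Vh := Vh.sub_mem (hPmem ξ₀) hwhm
    have ho := hPorth ξ₀ _ hd
    have hsum : ξ₀ - wh = (ξ₀ - P ξ₀) + (P ξ₀ - wh) := by abel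
    have hexp : tnorm ι A ω (ξ₀ - wh) ^ 2 =
        tnorm ι A ω (ξ₀ - P ξ₀) ^ 2 + 2 * bplus ι A ω (ξ₀ - P ξ₀) (P ξ₀ - wh)
          + tnorm ι A ω (P ξ₀ - wh) ^ 2 := by
      rw [← bplus_self, ← bplus_self, ← bplus_self, hsum, bplus, bplus, bplus, bplus]
      simp only [map_add, inner_add_left, inner_add_right]
      rw [real_inner_comm (ι (ξ₀ - P ξ₀)) (ι (P ξ₀ - wh)),
        real_inner_comm (A (ξ₀ - P ξ₀)) (A (P ξ₀ - wh))]
      ring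
    have hsq : tnorm ι A ω (ξ₀ - P ξ₀) ^ 2 ≤ tnorm ι A ω (ξ₀ - wh) ^ 2 := by
      rw [hexp, ho]
      nlinarith [sq_nonneg (tnorm ι A ω (P ξ₀ - wh))]
    nlinarith [tnorm_nonneg ι A ω (ξ₀ - P ξ₀), tnorm_nonneg ι A ω (ξ₀ - wh)]
  -- approximation bound
  have happb : |bform ι A ω (vh - vhPi) (P ξ₀ - ξ₀)| ≤ γapp * tnorm ι A ω vh ^ 2 := by
    have h1 := abs_bform_le ι A ω (vh - vhPi) (P ξ₀ - ξ₀)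
    have h2 : tnorm ι A ω (P ξ₀ - ξ₀) = tnorm ι A ω (ξ₀ - P ξ₀) := by
      rw [show P ξ₀ - ξ₀ = -(ξ₀ - P ξ₀) by abel, tnorm_neg]
    rw [h2] at h1
    have h3 : tnorm ι A ω (ξ₀ - P ξ₀) ≤ γapp * tnorm ι A ω vh := by
      refine le_trans hbest ?_
      have h4 : γapp * (ω * ‖ι (vh - vhPi) - Pi (ι (vh - vhPi))‖) ≤
          γapp * tnorm ι A ω vh := mul_le_mul_of_nonneg_left hωφT hγappnn
      linarith
    calc |bform ι A ω (vh - vhPi) (P ξ₀ - ξ₀)|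
        ≤ tnorm ι A ω (vh - vhPi) * tnorm ι A ω (ξ₀ - P ξ₀) := h1
      _ ≤ tnorm ι A ω vh * (γapp * tnorm ι A ω vh) := by
          apply mul_le_mul hTv0 h3 (tnorm_nonneg _ _ _ _)
          exact le_trans (tnorm_nonneg _ _ _ _) hTv0
      _ = γapp * tnorm ι A ω vh ^ 2 := by ring
  -- combine
  have hlin : bform ι A ω (vh - vhPi) (P ξ₀) =
      bform ι A ω (vh - vhPi) ξ₀ + bform ι A ω (vh - vhPi) (P ξ₀ - ξ₀) := by
    rw [bform, bform, bform, map_sub A (P ξ₀) ξ₀, map_sub ι (P ξ₀) ξ₀]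
    simp only [inner_sub_right]
    ring
  have habs := abs_le.mp happb
  rw [hsplit, hlin, hbv0ξ]
  nlinarith [hdivsq, habs.1]
end
end
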